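/- Let α be a smooth 1-form on ℝ^N, Γ : [a,b] × (−ε, ε) → ℝ^N a smooth variation with γ_s(t) = Γ(t,s), γ = γ₀, δγ(t) = ∂Γ/∂s(t,0). Assume γ is an integral curve of the characteristic line bundle of dα, i.e., dα(γ(t))(γ̇(t), w) = 0 for all t ∈ [a,b] and w ∈ ℝ^N, and that the endpoint variations are horizontal: α(γ(a))(δγ(a)) = 0 and α(γ(b))(δγ(b)) = 0. Then γ is a critical point of the action: d/ds |_{s=0} ∫_a^b α(γ_s(t))(γ̇_s(t)) dt = 0. -/

import Mathlib

/-!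
Write `P = Γ^*α` for the pulled-back 1-form on the `(t, s)`-plane, so that the action of `γ_s` is
`∫ P(∂ₜ)`. Differentiating under the integral sign and integrating `∂ₜ (P(∂ₛ))` over `[a, b]` gives
the first-variation formula `d/ds ∫ P(∂ₜ) = [P(∂ₛ)]ₐᵇ - ∫ dP(∂ₜ, ∂ₛ)`. Exterior differentiation
commutes with pullback (the second derivative of `Γ` is symmetric), so at `s = 0` the integrand is
`dα(γ̇, δγ)`, which vanishes since `γ̇` is characteristic; the boundary term vanishes because the
endpoint variations are horizontal.
-/

noncomputable section
open scoped ContDiff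

/-- The Lie derivative of a 1-form `α` on `ℝ^N` along a vector field `ζ`:
`(L_ζ α)(x)(v) = (Dα(x)(ζ(x)))(v) + α(x)(Dζ(x)(v))`. -/
def lieDerivV {N : ℕ} (ζ : (Fin N → ℝ) → (Fin N → ℝ))
    (α : (Fin N → ℝ) → ((Fin N → ℝ) →L[ℝ] ℝ)) (x : Fin N → ℝ) :
    (Fin N → ℝ) →L[ℝ] ℝ :=
  fderiv ℝ α x (ζ x) + (α x).comp (fderiv ℝ ζ x)

/-- The exterior derivative of a 1-form on `ℝ^N`:
`dα(x)(u,v) = (Dα(x)u)(v) − (Dα(x)v)(u)`. -/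
def extDerivV {N : ℕ} (α : (Fin N → ℝ) → ((Fin N → ℝ) →L[ℝ] ℝ)) (x u v : Fin N → ℝ) : ℝ :=
  fderiv ℝ α x u v - fderiv ℝ α x v u

theorem fderiv_clm_apply_const {𝕜 E F G : Type*} [NontriviallyNormedField 𝕜]
    [NormedAddCommGroup E] [NormedSpace 𝕜 E] [NormedAddCommGroup F] [NormedSpace 𝕜 F]
    [NormedAddCommGroup G] [NormedSpace 𝕜 G] {c : E → F →L[𝕜] G} {x : E}
    (hc : DifferentiableAt 𝕜 c x) (u : F) (v : E) :
    fderiv 𝕜 (fun y => c y u) x v = fderiv 𝕜 c x v u := by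
  simp [fderiv_clm_apply hc (differentiableAt_const u)]

section PartialDerivatives

variable {𝕜 E : Type*} [NontriviallyNormedField 𝕜] [NormedAddCommGroup E] [NormedSpace 𝕜 E]
  {X : 𝕜 × 𝕜 → E} {t s : 𝕜}

theorem DifferentiableAt.hasDerivAt_comp_mk_left (hX : DifferentiableAt 𝕜 X (t, s)) :
    HasDerivAt (fun u => X (u, s)) (fderiv 𝕜 X (t, s) (1, 0)) t :=
  hX.hasFDerivAt.comp_hasDerivAt t ((hasDerivAt_id t).prodMk (hasDerivAt_const t s))

theorem DifferentiableAt.hasDerivAt_comp_mk_right (hX : DifferentiableAt 𝕜 X (t, s)) :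
    HasDerivAt (fun σ => X (t, σ)) (fderiv 𝕜 X (t, s) (0, 1)) s :=
  hX.hasFDerivAt.comp_hasDerivAt s ((hasDerivAt_const s t).prodMk (hasDerivAt_id s))

end PartialDerivatives

section IntervalIntegral

variable {E : Type*} [NormedAddCommGroup E] [NormedSpace ℝ E] {X : ℝ × ℝ → E}

theorem ContDiff.integral_fderiv_apply_fst [CompleteSpace E] (hX : ContDiff ℝ 1 X) (a b s : ℝ) :
    ∫ t in a..b, fderiv ℝ X (t, s) (1, 0) = X (b, s) - X (a, s) := by
  have hmk : Continuous fun t : ℝ => (t, s) := by fun_prop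
  refine intervalIntegral.integral_eq_sub_of_hasDerivAt
    (fun t _ => (hX.differentiable one_ne_zero _).hasDerivAt_comp_mk_left) ?_
  exact (((hX.continuous_fderiv one_ne_zero).comp hmk).clm_apply
    continuous_const).intervalIntegrable a b

theorem ContDiff.hasDerivAt_intervalIntegral_snd (hX : ContDiff ℝ 1 X) (a b s₀ : ℝ) :
    HasDerivAt (fun s => ∫ t in a..b, X (t, s))
      (∫ t in a..b, fderiv ℝ X (t, s₀) (0, 1)) s₀ := by
  have hX' : Continuous fun p => fderiv ℝ X p (0, 1) :=
    (hX.continuous_fderiv one_ne_zero).clm_apply continuous_const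
  obtain ⟨C, hC⟩ : ∃ C, ∀ p ∈ Set.uIcc a b ×ˢ Metric.closedBall s₀ 1,
      ‖fderiv ℝ X p (0, 1)‖ ≤ C :=
    (isCompact_uIcc.prod (isCompact_closedBall _ _)).exists_bound_of_continuousOn
      hX'.continuousOn
  have hmk : ∀ s : ℝ, Continuous fun t : ℝ => (t, s) := by fun_prop
  exact (intervalIntegral.hasDerivAt_integral_of_dominated_loc_of_deriv_le
    (F := fun s t => X (t, s)) (bound := fun _ => C) (Metric.ball_mem_nhds s₀ one_pos)
    (.of_forall fun s => (hX.continuous.comp (hmk s)).aestronglyMeasurable)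
    ((hX.continuous.comp (hmk s₀)).intervalIntegrable a b)
    (hX'.comp (hmk s₀)).aestronglyMeasurable
    (.of_forall fun t ht s hs =>
      hC (t, s) ⟨Set.uIoc_subset_uIcc ht, Metric.ball_subset_closedBall hs⟩)
    intervalIntegrable_const
    (.of_forall fun t _ s _ => (hX.differentiable one_ne_zero _).hasDerivAt_comp_mk_right)).2

theorem ContDiff.hasDerivAt_intervalIntegral_apply_fst [CompleteSpace E]
    {β : ℝ × ℝ → ℝ × ℝ →L[ℝ] E} (hβ : ContDiff ℝ 1 β) (a b s₀ : ℝ) :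
    HasDerivAt (fun s => ∫ t in a..b, β (t, s) (1, 0))
      (β (b, s₀) (0, 1) - β (a, s₀) (0, 1) -
        ∫ t in a..b, (fderiv ℝ β (t, s₀) (1, 0) (0, 1) - fderiv ℝ β (t, s₀) (0, 1) (1, 0))) s₀ := by
  have hβd : Differentiable ℝ β := hβ.differentiable one_ne_zero
  have hβ' : Continuous fun p => fderiv ℝ β p := hβ.continuous_fderiv one_ne_zero
  have hmk : Continuous fun t : ℝ => (t, s₀) := by fun_prop
  have hint : ∀ v w : ℝ × ℝ,
      IntervalIntegrable (fun t => fderiv ℝ β (t, s₀) v w) MeasureTheory.volume a b :=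
    fun v w => (((hβ'.comp hmk).clm_apply continuous_const).clm_apply
      continuous_const).intervalIntegrable a b
  have h10 : ContDiff ℝ 1 fun p => β p (1, 0) := hβ.clm_apply contDiff_const
  have h01 : ContDiff ℝ 1 fun p => β p (0, 1) := hβ.clm_apply contDiff_const
  have h := h10.hasDerivAt_intervalIntegral_snd a b s₀
  rw [← h01.integral_fderiv_apply_fst a b s₀,
    intervalIntegral.integral_sub (hint _ _) (hint _ _)]
  simpa only [fderiv_clm_apply_const (hβd _), sub_sub_cancel] using h

end IntervalIntegral

section Pullback

variable {E F G : Type*} [NormedAddCommGroup E] [NormedSpace ℝ E] [NormedAddCommGroup F]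
  [NormedSpace ℝ F] [NormedAddCommGroup G] [NormedSpace ℝ G]

def pullbackForm (α : F → F →L[ℝ] G) (Γ : E → F) (p : E) : E →L[ℝ] G :=
  (α (Γ p)).comp (fderiv ℝ Γ p)

theorem ContDiff.pullbackForm {α : F → F →L[ℝ] G} {Γ : E → F} {n : WithTop ℕ∞}
    (hα : ContDiff ℝ n α) (hΓ : ContDiff ℝ (n + 1) Γ) : ContDiff ℝ n (pullbackForm α Γ) :=
  (hα.comp (hΓ.of_le le_self_add)).clm_comp (hΓ.fderiv_right le_rfl)

theorem fderiv_pullbackForm_sub_swap {N : ℕ} {α : (Fin N → ℝ) → ((Fin N → ℝ) →L[ℝ] ℝ)}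
    {Γ : E → Fin N → ℝ} {p : E} (hα : DifferentiableAt ℝ α (Γ p)) (hΓ : ContDiffAt ℝ 2 Γ p)
    (v w : E) :
    fderiv ℝ (pullbackForm α Γ) p v w - fderiv ℝ (pullbackForm α Γ) p w v =
      extDerivV α (Γ p) (fderiv ℝ Γ p v) (fderiv ℝ Γ p w) := by
  have hΓ' : DifferentiableAt ℝ (fderiv ℝ Γ) p :=
    (hΓ.fderiv_right (m := 1) (by norm_num)).differentiableAt one_ne_zero
  have hsymm := hΓ.isSymmSndFDerivAt (by simp) v w
  have hd := ((hα.hasFDerivAt.comp p (hΓ.differentiableAt two_ne_zero).hasFDerivAt).clm_comp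
    hΓ'.hasFDerivAt).fderiv
  rw [show pullbackForm α Γ = fun q => (α ∘ Γ) q ∘L fderiv ℝ Γ q from rfl, hd]
  simp [hsymm, extDerivV]

end Pullback

theorem integral_curve_is_critical_point {N : ℕ}
    (α : (Fin N → ℝ) → ((Fin N → ℝ) →L[ℝ] ℝ)) (hα : ContDiff ℝ ∞ α)
    (Γ : ℝ × ℝ → (Fin N → ℝ)) (hΓ : ContDiff ℝ ∞ Γ)
    (a b : ℝ) (hab : a < b)
    (hchar : ∀ t ∈ Set.Icc a b, ∀ w,
      extDerivV α (Γ (t, 0)) (deriv (fun u => Γ (u, 0)) t) w = 0)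
    (hhoriz_a : α (Γ (a, 0)) (deriv (fun s => Γ (a, s)) 0) = 0)
    (hhoriz_b : α (Γ (b, 0)) (deriv (fun s => Γ (b, s)) 0) = 0) :
    HasDerivAt
      (fun s => ∫ t in a..b, α (Γ (t, s)) (deriv (fun u => Γ (u, s)) t))
      0 0 := by
  have hα1 : ContDiff ℝ 1 α := hα.of_le (WithTop.coe_le_coe.2 le_top)
  have hΓ2 : ContDiff ℝ 2 Γ := hΓ.of_le (WithTop.coe_le_coe.2 le_top)
  have hΓd : Differentiable ℝ Γ := hΓ2.differentiable two_ne_zero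
  have hvel : ∀ t s, deriv (fun u => Γ (u, s)) t = fderiv ℝ Γ (t, s) (1, 0) :=
    fun t s => (hΓd _).hasDerivAt_comp_mk_left.deriv
  have hvar : ∀ t, deriv (fun s => Γ (t, s)) 0 = fderiv ℝ Γ (t, 0) (0, 1) :=
    fun t => (hΓd _).hasDerivAt_comp_mk_right.deriv
  have hclosed : ∀ t ∈ Set.uIcc a b, fderiv ℝ (pullbackForm α Γ) (t, 0) (1, 0) (0, 1) -
      fderiv ℝ (pullbackForm α Γ) (t, 0) (0, 1) (1, 0) = 0 := fun t ht => by
    rw [fderiv_pullbackForm_sub_swap (hα1.differentiable one_ne_zero _) hΓ2.contDiffAt, ← hvel]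
    exact hchar t (Set.uIcc_of_le hab.le ▸ ht) _
  have h := (hα1.pullbackForm hΓ2).hasDerivAt_intervalIntegral_apply_fst a b 0
  rw [intervalIntegral.integral_congr hclosed] at h
  simpa [pullbackForm, ← hvel, ← hvar, hhoriz_a, hhoriz_b] using h
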